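/- Let Σ be a p×p real symmetric positive definite matrix with eigenvalues λ₁ ≥ … ≥ λ_p > 0 (in decreasing order) and let S be a p×p real symmetric positive semidefinite matrix with eigenvalues d₁ ≥ … ≥ d_p (in decreasing order). Then tr(Σ⁻¹S) ≥ Σ_{i=1}^p d_i/λ_i. Equivalently, with A = −(n/2)·log det Σ − (n/2)·tr(Σ⁻¹S) and B = −(n/2)·Σ_{i=1}^p log λ_i − (n/2)·Σ_{i=1}^p d_i/λ_i for any n > 0, one has A ≤ B. -/

import Mathlib

open Matrix Finset

/-! With `U = Γᵀ C` orthogonal, `tr(Σ⁻¹S) = ∑ᵢⱼ λᵢ⁻¹ Uᵢⱼ² dⱼ`, and `(Uᵢⱼ²)` is doubly stochastic.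
By Birkhoff's theorem it is a convex combination of permutation matrices, and for each permutation
`σ` the rearrangement inequality gives `∑ᵢ λᵢ⁻¹ d_{σ i} ≥ ∑ᵢ λᵢ⁻¹ dᵢ`, since `λ⁻¹` increases while
`d` decreases. -/

namespace Matrix

variable {n R : Type*} [Fintype n] [DecidableEq n]

theorem dotProduct_le_dotProduct_mulVec_of_antivary [Field R] [LinearOrder R]
    [IsStrictOrderedRing R] {W : Matrix n n R} (hW : W ∈ doublyStochastic R n) {f g : n → R}
    (hfg : Antivary f g) : f ⬝ᵥ g ≤ f ⬝ᵥ (W *ᵥ g) := by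
  obtain ⟨w, hw_nonneg, hw_sum, rfl⟩ := exists_eq_sum_perm_of_mem_doublyStochastic hW
  have hperm (σ : Equiv.Perm n) : f ⬝ᵥ g ≤ f ⬝ᵥ (σ.permMatrix R *ᵥ g) := by
    simpa [permMatrix_mulVec, dotProduct] using hfg.sum_smul_le_sum_smul_comp_perm (σ := σ)
  calc f ⬝ᵥ g = ∑ σ, w σ * f ⬝ᵥ g := by rw [← Finset.sum_mul, hw_sum, one_mul]
    _ ≤ ∑ σ, w σ * f ⬝ᵥ (σ.permMatrix R *ᵥ g) := by gcongr with σ; exacts [hw_nonneg σ, hperm σ]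
    _ = f ⬝ᵥ ((∑ σ, w σ • σ.permMatrix R) *ᵥ g) := by
      simp [sum_mulVec, dotProduct_sum, smul_mulVec, dotProduct_smul]

section Orthogonal

attribute [local instance] starRingOfComm

theorem hadamard_self_mem_doublyStochastic [CommRing R] [LinearOrder R] [IsStrictOrderedRing R]
    {U : Matrix n n R} (hU : U ∈ orthogonalGroup n R) : U ⊙ U ∈ doublyStochastic R n := by
  refine mem_doublyStochastic_iff_sum.2 ⟨fun i j => mul_self_nonneg _, fun i => ?_, fun j => ?_⟩
  · simpa [mul_apply, one_apply] using congr_fun₂ ((mem_orthogonalGroup_iff n R).1 hU) i i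
  · simpa [mul_apply, one_apply] using congr_fun₂ ((mem_orthogonalGroup_iff' n R).1 hU) j j

theorem det_conj_diagonal [CommRing R] {Γ : Matrix n n R} (hΓ : Γ ∈ orthogonalGroup n R)
    (v : n → R) : det (Γ * diagonal v * Γᵀ) = ∏ i, v i := by
  rw [det_mul_comm, ← Matrix.mul_assoc, (mem_orthogonalGroup_iff' n R).1 hΓ, Matrix.one_mul,
    det_diagonal]

theorem inv_conj_diagonal [Field R] {Γ : Matrix n n R} (hΓ : Γ ∈ orthogonalGroup n R)
    {v : n → R} (hv : ∀ i, v i ≠ 0) : (Γ * diagonal v * Γᵀ)⁻¹ = Γ * diagonal v⁻¹ * Γᵀ := by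
  refine inv_eq_right_inv ?_
  have hvv : diagonal v * diagonal v⁻¹ = 1 := by
    rw [diagonal_mul_diagonal, ← diagonal_one]
    exact congrArg diagonal (funext fun i => mul_inv_cancel₀ (hv i))
  simp only [Matrix.mul_assoc]
  rw [← Matrix.mul_assoc Γᵀ, (mem_orthogonalGroup_iff' n R).1 hΓ, Matrix.one_mul,
    ← Matrix.mul_assoc (diagonal v), hvv, Matrix.one_mul, (mem_orthogonalGroup_iff n R).1 hΓ]

end Orthogonal

theorem trace_diagonal_mul_diagonal_mul_transpose [CommSemiring R] (U : Matrix n n R)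
    (a b : n → R) : trace (diagonal a * U * diagonal b * Uᵀ) = a ⬝ᵥ ((U ⊙ U) *ᵥ b) := by
  refine Finset.sum_congr rfl fun i _ => ?_
  rw [diag_apply, mul_apply]
  simp only [mul_diagonal, diagonal_mul, transpose_apply, mulVec, dotProduct, hadamard_apply,
    Finset.mul_sum]
  exact Finset.sum_congr rfl fun j _ => by ring

theorem trace_conj_diagonal_mul_conj_diagonal [CommSemiring R] (Γ C : Matrix n n R)
    (a b : n → R) :
    trace (Γ * diagonal a * Γᵀ * (C * diagonal b * Cᵀ)) = a ⬝ᵥ (((Γᵀ * C) ⊙ (Γᵀ * C)) *ᵥ b) := by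
  rw [← trace_diagonal_mul_diagonal_mul_transpose, transpose_mul, transpose_transpose]
  simp only [Matrix.mul_assoc]
  rw [trace_mul_comm Γ]
  simp only [Matrix.mul_assoc]

end Matrix

theorem trace_inv_mul_ge_general (p : ℕ)
    (Γ C : Matrix (Fin p) (Fin p) ℝ)
    (lamv d : Fin p → ℝ)
    (hΓ : Γ * Γᵀ = 1)
    (hC : C * Cᵀ = 1)
    (hlam_anti : ∀ i j : Fin p, i ≤ j → lamv j ≤ lamv i)
    (hlam_pos : ∀ i : Fin p, 0 < lamv i)
    (hd_anti : ∀ i j : Fin p, i ≤ j → d j ≤ d i)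
    (Sig S : Matrix (Fin p) (Fin p) ℝ)
    (hSig : Sig = Γ * Matrix.diagonal lamv * Γᵀ)
    (hS : S = C * Matrix.diagonal d * Cᵀ) :
    (∑ i : Fin p, d i / lamv i) ≤ Matrix.trace (Sig⁻¹ * S) ∧
      ∀ n : ℝ, 0 < n →
        -(n / 2) * Real.log Sig.det - (n / 2) * Matrix.trace (Sig⁻¹ * S)
          ≤ -(n / 2) * (∑ i : Fin p, Real.log (lamv i))
              - (n / 2) * ∑ i : Fin p, d i / lamv i := by
  have hΓo : Γ ∈ orthogonalGroup (Fin p) ℝ := (mem_orthogonalGroup_iff _ _).2 hΓ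
  have hCo : C ∈ orthogonalGroup (Fin p) ℝ := (mem_orthogonalGroup_iff _ _).2 hC
  have hU : Γᵀ * C ∈ orthogonalGroup (Fin p) ℝ :=
    mul_mem (transpose_mem_unitaryGroup_iff.2 hΓo) hCo
  have hanti : Antivary lamv⁻¹ d := fun i j hd =>
    inv_anti₀ (hlam_pos i) (hlam_anti j i (not_lt.1 fun hij => (hd_anti i j hij.le).not_gt hd))
  have hmain : ∑ i, d i / lamv i ≤ trace (Sig⁻¹ * S) := by
    rw [hSig, hS, inv_conj_diagonal hΓo fun i => (hlam_pos i).ne',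
      trace_conj_diagonal_mul_conj_diagonal]
    calc ∑ i, d i / lamv i = lamv⁻¹ ⬝ᵥ d := by simp [dotProduct, div_eq_inv_mul]
      _ ≤ _ := dotProduct_le_dotProduct_mulVec_of_antivary
          (hadamard_self_mem_doublyStochastic hU) hanti
  refine ⟨hmain, fun n hn => ?_⟩
  rw [hSig, det_conj_diagonal hΓo, Real.log_prod fun i _ => (hlam_pos i).ne', ← hSig]
  have := mul_le_mul_of_nonneg_left hmain (half_pos hn).le
  linarith

/-- If `Σ` is symmetric positive definite with decreasing
eigenvalues `λ₁ ≥ … ≥ λ_p > 0` and `S` is symmetric positive semidefinite with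
decreasing eigenvalues `d₁ ≥ … ≥ d_p`, then `tr(Σ⁻¹S) ≥ Σ_i d_i/λ_i`;
equivalently, for every `n > 0`,
`A = −(n/2) log det Σ − (n/2) tr(Σ⁻¹S)` satisfies
`A ≤ B = −(n/2) Σ_i log λ_i − (n/2) Σ_i d_i/λ_i`. -/
theorem trace_inv_mul_ge (p : ℕ) (hp : 1 ≤ p)
    (Γ C : Matrix (Fin p) (Fin p) ℝ)
    (lamv d : Fin p → ℝ)
    (hΓ : Γ * Γᵀ = 1) (hΓ' : Γᵀ * Γ = 1)
    (hC : C * Cᵀ = 1) (hC' : Cᵀ * C = 1)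
    (hlam_anti : ∀ i j : Fin p, i ≤ j → lamv j ≤ lamv i)
    (hlam_pos : ∀ i : Fin p, 0 < lamv i)
    (hd_anti : ∀ i j : Fin p, i ≤ j → d j ≤ d i)
    (hd_nonneg : ∀ i : Fin p, 0 ≤ d i)
    (Sig S : Matrix (Fin p) (Fin p) ℝ)
    (hSig : Sig = Γ * Matrix.diagonal lamv * Γᵀ)
    (hS : S = C * Matrix.diagonal d * Cᵀ) :
    (∑ i : Fin p, d i / lamv i) ≤ Matrix.trace (Sig⁻¹ * S) ∧
      ∀ n : ℝ, 0 < n →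
        -(n / 2) * Real.log Sig.det - (n / 2) * Matrix.trace (Sig⁻¹ * S)
          ≤ -(n / 2) * (∑ i : Fin p, Real.log (lamv i))
              - (n / 2) * ∑ i : Fin p, d i / lamv i :=
  trace_inv_mul_ge_general p Γ C lamv d hΓ hC hlam_anti hlam_pos hd_anti Sig S hSig hS
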